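/- Let I be a finite nonempty index set, let (w_i)_{i∈I} be positive real weights with ∑_{i∈I} w_i = 1, let (μ_i)_{i∈I} be probability measures on a measurable space, and let g be a probability measure on the same space. Let μ_AA = ∑_{i∈I} w_i μ_i. If D_KL(μ_i ‖ g) is finite for every i ∈ I, then ∑_{i∈I} w_i · D_KL(μ_i ‖ g) = ∑_{i∈I} w_i · D_KL(μ_i ‖ μ_AA) + D_KL(μ_AA ‖ g). -/

import Mathlib

open MeasureTheory BigOperators ENNReal
open scoped Classical

/-- Kullback–Leibler divergence: `∫ log (dμ/dν) dμ` when `μ ≪ ν` and the log-likelihood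
ratio is integrable, and `+∞` otherwise. -/
noncomputable def klDiv {α : Type*} [MeasurableSpace α] (μ ν : Measure α) : ℝ≥0∞ :=
  if μ ≪ ν ∧ Integrable (llr μ ν) μ then ENNReal.ofReal (∫ x, llr μ ν x ∂μ) else ⊤

/-! Each component is dominated by the mixture, `wᵢ μᵢ ≤ μ_AA`, so `dμᵢ/dμ_AA ≤ 1/wᵢ` and
`llr μᵢ μ_AA` is integrable. The chain rule `log dμᵢ/dg = log dμᵢ/dμ_AA + log dμ_AA/dg`,
integrated against `μᵢ` and averaged with the weights `wᵢ`, gives the identity in real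
numbers; Gibbs' inequality makes all three divergences nonnegative, so the identity survives
the passage to `ℝ≥0∞`. -/

open Real Finset

section LogLikelihoodRatio

variable {α : Type*} [MeasurableSpace α] {μ ν ρ : Measure α}

lemma llr_ae_eq_llr_add_llr [SigmaFinite μ] [SigmaFinite ν] [SigmaFinite ρ]
    (hμν : μ ≪ ν) (hνρ : ν ≪ ρ) :
    llr μ ρ =ᵐ[μ] fun x ↦ llr μ ν x + llr ν ρ x := by
  have hμρ := hμν.trans hνρ
  filter_upwards [hμρ.ae_le (Measure.rnDeriv_mul_rnDeriv hμν), Measure.rnDeriv_pos hμν,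
    hμν.ae_le (Measure.rnDeriv_lt_top μ ν), hμν.ae_le (Measure.rnDeriv_pos hνρ),
    hμρ.ae_le (Measure.rnDeriv_lt_top ν ρ)] with x hx hpos₁ hlt₁ hpos₂ hlt₂
  simp only [llr_def]
  rw [← hx, Pi.mul_apply, ENNReal.toReal_mul,
    log_mul (ENNReal.toReal_pos hpos₁.ne' hlt₁.ne).ne' (ENNReal.toReal_pos hpos₂.ne' hlt₂.ne).ne']

lemma integrable_llr_of_integrable_llr_trans [SigmaFinite μ] [SigmaFinite ν] [SigmaFinite ρ]
    (hμν : μ ≪ ν) (hνρ : ν ≪ ρ) (hμρ_int : Integrable (llr μ ρ) μ)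
    (hμν_int : Integrable (llr μ ν) μ) : Integrable (llr ν ρ) μ :=
  (hμρ_int.sub hμν_int).congr <| by
    filter_upwards [llr_ae_eq_llr_add_llr hμν hνρ] with x hx
    simp [hx]

lemma integral_llr_eq_add [SigmaFinite μ] [SigmaFinite ν] [SigmaFinite ρ]
    (hμν : μ ≪ ν) (hνρ : ν ≪ ρ) (hμν_int : Integrable (llr μ ν) μ)
    (hνρ_int : Integrable (llr ν ρ) μ) :
    ∫ x, llr μ ρ x ∂μ = ∫ x, llr μ ν x ∂μ + ∫ x, llr ν ρ x ∂μ := by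
  rw [integral_congr_ae (llr_ae_eq_llr_add_llr hμν hνρ), integral_add hμν_int hνρ_int]

lemma rnDeriv_le_inv_of_smul_le [IsFiniteMeasure μ] [SigmaFinite ν] {c : ℝ≥0∞} (hc : c ≠ ∞)
    (h : c • μ ≤ ν) : ∀ᵐ x ∂ν, μ.rnDeriv ν x ≤ c⁻¹ := by
  filter_upwards [Measure.rnDeriv_le_one_of_le h, Measure.rnDeriv_smul_left_of_ne_top μ ν hc]
    with x hle heq
  rw [heq, Pi.smul_apply, smul_eq_mul, Pi.one_apply] at hle
  rwa [ENNReal.le_inv_iff_mul_le, mul_comm]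

lemma absolutelyContinuous_of_smul_le {c : ℝ≥0∞} (hc₀ : c ≠ 0) (h : c • μ ≤ ν) : μ ≪ ν :=
  (Measure.absolutelyContinuous_smul hc₀).trans (Measure.absolutelyContinuous_of_le h)

lemma integrable_llr_of_smul_le [IsFiniteMeasure μ] [IsFiniteMeasure ν] {c : ℝ≥0∞}
    (hc₀ : c ≠ 0) (hc : c ≠ ∞) (h : c • μ ≤ ν) : Integrable (llr μ ν) μ := by
  rw [← integrable_rnDeriv_mul_log_iff (absolutelyContinuous_of_smul_le hc₀ h)]
  obtain ⟨C, hC⟩ := (isCompact_Icc (a := 0) (b := c⁻¹.toReal)).exists_bound_of_continuousOn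
    continuous_mul_log.continuousOn
  refine Integrable.of_bound (by fun_prop) C ?_
  filter_upwards [rnDeriv_le_inv_of_smul_le hc h] with x hx
  exact hC _ ⟨ENNReal.toReal_nonneg, ENNReal.toReal_mono (ENNReal.inv_ne_top.2 hc₀) hx⟩

end LogLikelihoodRatio

section KullbackLeibler

variable {α : Type*} [MeasurableSpace α] {μ ν : Measure α}

lemma klDiv_ne_top_iff : klDiv μ ν ≠ ⊤ ↔ μ ≪ ν ∧ Integrable (llr μ ν) μ := by
  by_cases h : μ ≪ ν ∧ Integrable (llr μ ν) μ <;> simp [klDiv, h]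

lemma klDiv_of_ac_of_integrable (hμν : μ ≪ ν) (h_int : Integrable (llr μ ν) μ) :
    klDiv μ ν = ENNReal.ofReal (∫ x, llr μ ν x ∂μ) :=
  if_pos ⟨hμν, h_int⟩

lemma integral_llr_nonneg [IsProbabilityMeasure μ] [IsProbabilityMeasure ν] (hμν : μ ≪ ν)
    (h_int : Integrable (llr μ ν) μ) : 0 ≤ ∫ x, llr μ ν x ∂μ := by
  simpa using InformationTheory.integral_llr_add_sub_measure_univ_nonneg hμν h_int

end KullbackLeibler

section AAFusion

variable {α ι : Type*} [MeasurableSpace α] [Fintype ι]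

noncomputable def aaFusion (w : ι → ℝ) (μ : ι → Measure α) : Measure α :=
  ∑ j, ENNReal.ofReal (w j) • μ j

variable {w : ι → ℝ} {μ : ι → Measure α}

lemma ofReal_smul_le_aaFusion (i : ι) : ENNReal.ofReal (w i) • μ i ≤ aaFusion w μ :=
  single_le_sum (f := fun j ↦ ENNReal.ofReal (w j) • μ j) (fun _ _ ↦ Measure.zero_le _)
    (mem_univ i)

lemma aaFusion_absolutelyContinuous {g : Measure α} (h : ∀ i, μ i ≪ g) : aaFusion w μ ≪ g := by
  rw [aaFusion, ← Measure.sum_fintype]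
  exact Measure.absolutelyContinuous_sum_left fun i ↦ (h i).smul_left _

lemma isProbabilityMeasure_aaFusion (hw : ∀ i, 0 ≤ w i) (hw_sum : ∑ i, w i = 1)
    [∀ i, IsProbabilityMeasure (μ i)] : IsProbabilityMeasure (aaFusion w μ) := by
  constructor
  simp only [aaFusion, Measure.finsetSum_apply, Measure.smul_apply, measure_univ, smul_eq_mul,
    mul_one]
  rw [← ENNReal.ofReal_sum_of_nonneg fun i _ ↦ hw i, hw_sum, ENNReal.ofReal_one]

lemma integrable_aaFusion_iff (hw : ∀ i, 0 < w i) {f : α → ℝ} :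
    Integrable f (aaFusion w μ) ↔ ∀ i, Integrable f (μ i) := by
  simp [aaFusion, integrable_finsetSum_measure, integrable_smul_measure, hw]

lemma integral_aaFusion (hw : ∀ i, 0 ≤ w i) {f : α → ℝ} (hf : ∀ i, Integrable f (μ i)) :
    ∫ x, f x ∂(aaFusion w μ) = ∑ i, w i * ∫ x, f x ∂(μ i) := by
  rw [aaFusion, integral_finsetSum_measure fun i _ ↦ (hf i).smul_measure ENNReal.ofReal_ne_top]
  simp [integral_smul_measure, ENNReal.toReal_ofReal (hw _)]

end AAFusion

lemma ENNReal.sum_ofReal_mul_ofReal {ι : Type*} (s : Finset ι) {w x : ι → ℝ}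
    (hw : ∀ i, 0 ≤ w i) (hx : ∀ i, 0 ≤ x i) :
    ∑ i ∈ s, ENNReal.ofReal (w i) * ENNReal.ofReal (x i) = ENNReal.ofReal (∑ i ∈ s, w i * x i) := by
  rw [ENNReal.ofReal_sum_of_nonneg fun i _ ↦ mul_nonneg (hw i) (hx i)]
  exact sum_congr rfl fun i _ ↦ (ENNReal.ofReal_mul (hw i)).symm

theorem aa_fusion_kl_compensation_general
    {α : Type*} [MeasurableSpace α]
    {ι : Type*} [Fintype ι]
    (w : ι → ℝ) (hw_pos : ∀ i, 0 < w i) (hw_sum : ∑ i, w i = 1)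
    (μ : ι → Measure α) (hμ : ∀ i, IsProbabilityMeasure (μ i))
    (g : Measure α) (hg : IsProbabilityMeasure g)
    (hfin : ∀ i, klDiv (μ i) g ≠ ⊤) :
    ∑ i, ENNReal.ofReal (w i) * klDiv (μ i) g
      = ∑ i, ENNReal.ofReal (w i) * klDiv (μ i) (∑ j, ENNReal.ofReal (w j) • μ j)
        + klDiv (∑ j, ENNReal.ofReal (w j) • μ j) g := by
  change _ = ∑ i, _ * klDiv (μ i) (aaFusion w μ) + klDiv (aaFusion w μ) g
  set ν := aaFusion w μ
  have hw : ∀ i, 0 ≤ w i := fun i ↦ (hw_pos i).le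
  have hw₀ : ∀ i, ENNReal.ofReal (w i) ≠ 0 := fun i ↦ (ENNReal.ofReal_pos.2 (hw_pos i)).ne'
  have : IsProbabilityMeasure ν := isProbabilityMeasure_aaFusion hw hw_sum
  obtain ⟨hμg, hμg_int⟩ := forall_and.1 fun i ↦ klDiv_ne_top_iff.1 (hfin i)
  have hμν_int : ∀ i, Integrable (llr (μ i) ν) (μ i) := fun i ↦
    integrable_llr_of_smul_le (hw₀ i) ENNReal.ofReal_ne_top (ofReal_smul_le_aaFusion i)
  have hμν : ∀ i, μ i ≪ ν := fun i ↦
    absolutelyContinuous_of_smul_le (hw₀ i) (ofReal_smul_le_aaFusion i)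
  have hνg : ν ≪ g := aaFusion_absolutelyContinuous hμg
  have hνg_int : ∀ i, Integrable (llr ν g) (μ i) := fun i ↦
    integrable_llr_of_integrable_llr_trans (hμν i) hνg (hμg_int i) (hμν_int i)
  have hνg_int' : Integrable (llr ν g) ν := (integrable_aaFusion_iff hw_pos).2 hνg_int
  have compensation : ∑ i, w i * ∫ x, llr (μ i) g x ∂(μ i)
      = ∑ i, w i * ∫ x, llr (μ i) ν x ∂(μ i) + ∫ x, llr ν g x ∂ν := by
    rw [integral_aaFusion hw hνg_int, ← sum_add_distrib]
    simp only [integral_llr_eq_add (hμν _) hνg (hμν_int _) (hνg_int _), mul_add]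
  have hμν_nonneg : ∀ i, 0 ≤ ∫ x, llr (μ i) ν x ∂(μ i) := fun i ↦
    integral_llr_nonneg (hμν i) (hμν_int i)
  simp only [klDiv_of_ac_of_integrable, hμg, hμg_int, hμν, hμν_int, hνg, hνg_int']
  rw [ENNReal.sum_ofReal_mul_ofReal _ hw fun i ↦ integral_llr_nonneg (hμg i) (hμg_int i),
    ENNReal.sum_ofReal_mul_ofReal _ hw hμν_nonneg, compensation,
    ENNReal.ofReal_add (sum_nonneg fun i _ ↦ mul_nonneg (hw i) (hμν_nonneg i))
      (integral_llr_nonneg hνg hνg_int')]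

/-- compensation identity for the arithmetic-average (AA) mixture:
`∑ wᵢ D(μᵢ‖g) = ∑ wᵢ D(μᵢ‖μ_AA) + D(μ_AA‖g)` when each `D(μᵢ‖g)` is finite. -/
theorem aa_fusion_kl_compensation
    {α : Type*} [MeasurableSpace α]
    {ι : Type*} [Fintype ι] [Nonempty ι]
    (w : ι → ℝ) (hw_pos : ∀ i, 0 < w i) (hw_sum : ∑ i, w i = 1)
    (μ : ι → Measure α) (hμ : ∀ i, IsProbabilityMeasure (μ i))
    (g : Measure α) (hg : IsProbabilityMeasure g)
    (hfin : ∀ i, klDiv (μ i) g ≠ ⊤) :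
    ∑ i, ENNReal.ofReal (w i) * klDiv (μ i) g
      = ∑ i, ENNReal.ofReal (w i) * klDiv (μ i) (∑ j, ENNReal.ofReal (w j) • μ j)
        + klDiv (∑ j, ENNReal.ofReal (w j) • μ j) g :=
  aa_fusion_kl_compensation_general w hw_pos hw_sum μ hμ g hg hfin
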